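/- arXiv:2104.12917 — 3 statements merged into one kernel-verified Lean document; each statement's English description precedes it below -/
import Mathlib

section
/- For every additive map x : Q → ℝ and all real numbers r, s, the Moy–Prasad subspaces of the loop algebra satisfy [𝔨_{x,r}, 𝔨_{x,s}] ⊆ 𝔨_{x,r+s} and [𝔨_{x,r}, 𝔨_{x,s+}] ⊆ 𝔨_{x,(r+s)+}. In particular, for r ≥ 0 both 𝔨_{x,r} and 𝔨_{x,r+} are Lie subalgebras of 𝔤((t)). -/
open HahnSeries

section LoopAlgebra

variable (k : Type*) [Field k]
variable (g : Type*) [LieRing g] [LieAlgebra k g]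

/-- `g` viewed as a (nonunital, nonassociative) ring with multiplication the Lie bracket;
this induces the natural multiplication on `HahnSeries ℤ g = 𝔤((t))` given by
`[a ⊗ f, b ⊗ g] = [a,b] ⊗ fg`. -/
noncomputable instance lieRingAsRing : NonUnitalNonAssocRing g :=
  { (inferInstance : AddCommGroup g) with
    mul := fun a b => ⁅a, b⁆
    left_distrib := fun a b c => lie_add a b c
    right_distrib := fun a b c => add_lie a b c
    zero_mul := fun a => zero_lie a
    mul_zero := fun a => lie_zero a }

variable {Q : Type*} [AddCommGroup Q]

variable {k g}

/-- The Moy–Prasad subspace `𝔨_{x,r}` of the loop algebra `𝔤((t)) = HahnSeries ℤ 𝔤`: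
those `v` each of whose `t^i`-coefficients lies in the span of the root spaces `G α`
with `x α + i ≥ r`. -/
noncomputable def MP (G : Q → Submodule k g) (x : Q →+ ℝ) (r : ℝ) :
    Submodule k (HahnSeries ℤ g) where
  carrier := {v | ∀ i : ℤ, v.coeff i ∈ ⨆ α ∈ {α : Q | r ≤ x α + i}, G α}
  zero_mem' := by intro i; simp
  add_mem' := by
    intro a b ha hb i
    rw [HahnSeries.coeff_add]
    exact add_mem (ha i) (hb i)
  smul_mem' := by
    intro c a ha i
    rw [HahnSeries.coeff_smul]
    exact Submodule.smul_mem _ _ (ha i)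

/-- The Moy–Prasad subspace `𝔨_{x,r+}`, with strict inequality. -/
noncomputable def MPplus (G : Q → Submodule k g) (x : Q →+ ℝ) (r : ℝ) :
    Submodule k (HahnSeries ℤ g) where
  carrier := {v | ∀ i : ℤ, v.coeff i ∈ ⨆ α ∈ {α : Q | r < x α + i}, G α}
  zero_mem' := by intro i; simp
  add_mem' := by
    intro a b ha hb i
    rw [HahnSeries.coeff_add]
    exact add_mem (ha i) (hb i)
  smul_mem' := by
    intro c a ha i
    rw [HahnSeries.coeff_smul]
    exact Submodule.smul_mem _ _ (ha i)

end LoopAlgebra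

theorem HahnSeries.coeff_mul_mem {Γ R S : Type*} [AddCommMonoid Γ] [PartialOrder Γ]
    [IsOrderedCancelAddMonoid Γ] [NonUnitalNonAssocSemiring R] [SetLike S R]
    [AddSubmonoidClass S R] (C : S) {v w : HahnSeries Γ R} {i : Γ}
    (h : ∀ j l, j + l = i → v.coeff j * w.coeff l ∈ C) : (v * w).coeff i ∈ C := by
  rw [HahnSeries.coeff_mul]
  exact sum_mem fun jl hjl => h jl.1 jl.2 (Finset.mem_antidiagonal.mp hjl).2.2

theorem lie_mem_biSup_of_add_mem {R L Q : Type*} [CommRing R] [LieRing L] [LieAlgebra R L]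
    [AddCommGroup Q] {G : Q → Submodule R L}
    (hbr : ∀ (α β : Q) (a b : L), a ∈ G α → b ∈ G β → ⁅a, b⁆ ∈ G (α + β))
    {S T U : Set Q} (hST : ∀ α ∈ S, ∀ β ∈ T, α + β ∈ U)
    {a b : L} (ha : a ∈ ⨆ α ∈ S, G α) (hb : b ∈ ⨆ β ∈ T, G β) :
    ⁅a, b⁆ ∈ ⨆ γ ∈ U, G γ := by
  rw [iSup_subtype'] at ha hb
  refine Submodule.iSup_induction _ (motive := fun a => ⁅a, b⁆ ∈ ⨆ γ ∈ U, G γ) ha ?_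
    (by simp) fun y z hy hz => by rw [add_lie]; exact add_mem hy hz
  rintro ⟨α, hα⟩ a' ha'
  refine Submodule.iSup_induction _ (motive := fun b => ⁅a', b⁆ ∈ ⨆ γ ∈ U, G γ) hb ?_
    (by simp) fun y z hy hz => by rw [lie_add]; exact add_mem hy hz
  rintro ⟨β, hβ⟩ b' hb'
  exact le_biSup G (hST α hα β hβ) (hbr α β a' b' ha' hb')

section MoyPrasad

variable {k : Type*} [Field k] {g : Type*} [LieRing g] [LieAlgebra k g]
variable {Q : Type*} [AddCommGroup Q] (G : Q → Submodule k g)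

theorem MP_antitone (x : Q →+ ℝ) : Antitone (MP G x) :=
  fun _ _ h _ hv i => biSup_mono (f := G) (fun _ (hα : _ ≤ _) => h.trans hα) (hv i)

theorem MPplus_antitone (x : Q →+ ℝ) : Antitone (MPplus G x) :=
  fun _ _ h _ hv i => biSup_mono (f := G) (fun _ (hα : _ < _) => h.trans_lt hα) (hv i)

theorem MPplus_le_MP (x : Q →+ ℝ) (r : ℝ) : MPplus G x r ≤ MP G x r :=
  fun _ hv i => biSup_mono (f := G) (fun α (hα : r < x α + i) => hα.le) (hv i)

variable {G}

/-- The `(α, j)`- and `(β, l)`-components of `v` and `w` only feed the `(α + β, j + l)`-component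
of `v * w`, and since `x` is additive its level `x (α + β) + (j + l)` is the sum of theirs. -/
theorem mul_mem_MP_add
    (hbr : ∀ (α β : Q) (a b : g), a ∈ G α → b ∈ G β → ⁅a, b⁆ ∈ G (α + β))
    {x : Q →+ ℝ} {r s : ℝ} {v w : HahnSeries ℤ g} (hv : v ∈ MP G x r) (hw : w ∈ MP G x s) :
    v * w ∈ MP G x (r + s) := by
  intro i
  refine HahnSeries.coeff_mul_mem _ fun j l hjl => lie_mem_biSup_of_add_mem hbr ?_ (hv j) (hw l)
  intro α (hα : r ≤ x α + j) β (hβ : s ≤ x β + l)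
  show r + s ≤ x (α + β) + i
  rw [map_add, ← hjl]
  push_cast
  linarith

theorem mul_mem_MPplus_add
    (hbr : ∀ (α β : Q) (a b : g), a ∈ G α → b ∈ G β → ⁅a, b⁆ ∈ G (α + β))
    {x : Q →+ ℝ} {r s : ℝ} {v w : HahnSeries ℤ g} (hv : v ∈ MP G x r) (hw : w ∈ MPplus G x s) :
    v * w ∈ MPplus G x (r + s) := by
  intro i
  refine HahnSeries.coeff_mul_mem _ fun j l hjl => lie_mem_biSup_of_add_mem hbr ?_ (hv j) (hw l)
  intro α (hα : r ≤ x α + j) β (hβ : s < x β + l)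
  show r + s < x (α + β) + i
  rw [map_add, ← hjl]
  push_cast
  linarith

end MoyPrasad

theorem moy_prasad_bracket_general
    {k : Type*} [Field k] {g : Type*} [LieRing g] [LieAlgebra k g]
    {Q : Type*} [AddCommGroup Q]
    (G : Q → Submodule k g)
    (hbr : ∀ (α β : Q) (a b : g), a ∈ G α → b ∈ G β → ⁅a, b⁆ ∈ G (α + β))
    (x : Q →+ ℝ) (r s : ℝ) :
    (∀ v ∈ MP G x r, ∀ w ∈ MP G x s, v * w ∈ MP G x (r + s)) ∧
    (∀ v ∈ MP G x r, ∀ w ∈ MPplus G x s, v * w ∈ MPplus G x (r + s)) ∧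
    (0 ≤ r →
      (∀ v ∈ MP G x r, ∀ w ∈ MP G x r, v * w ∈ MP G x r) ∧
      (∀ v ∈ MPplus G x r, ∀ w ∈ MPplus G x r, v * w ∈ MPplus G x r)) := by
  refine ⟨fun v hv w hw => mul_mem_MP_add hbr hv hw,
    fun v hv w hw => mul_mem_MPplus_add hbr hv hw, fun hr => ⟨?_, ?_⟩⟩
  · intro v hv w hw
    exact MP_antitone G x (le_add_of_nonneg_left hr) (mul_mem_MP_add hbr hv hw)
  · intro v hv w hw
    exact MPplus_antitone G x (le_add_of_nonneg_left hr)
      (mul_mem_MPplus_add hbr (MPplus_le_MP G x r hv) hw)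

/-- For every additive `x : Q → ℝ` and all reals `r, s`, the Moy–Prasad
subspaces of the loop algebra `𝔤((t)) = HahnSeries ℤ 𝔤` (whose Lie bracket is the
multiplication `v * w` induced by `[a ⊗ f, b ⊗ g] = [a,b] ⊗ fg`) satisfy
`[𝔨_{x,r}, 𝔨_{x,s}] ⊆ 𝔨_{x,r+s}` and `[𝔨_{x,r}, 𝔨_{x,s+}] ⊆ 𝔨_{x,(r+s)+}`; in particular,
for `r ≥ 0` both `𝔨_{x,r}` and `𝔨_{x,r+}` are closed under the bracket, i.e. are Lie
subalgebras of `𝔤((t))` (they are `k`-subspaces by construction). -/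
theorem moy_prasad_bracket
    {k : Type*} [Field k] {g : Type*} [LieRing g] [LieAlgebra k g]
    {Q : Type*} [AddCommGroup Q] [DecidableEq Q]
    (Φ : Finset Q) (hΦ : (0 : Q) ∉ Φ)
    (G : Q → Submodule k g)
    (hsupp : ∀ α : Q, α ∉ Φ → α ≠ 0 → G α = ⊥)
    (hdec : DirectSum.IsInternal G)
    (hbr : ∀ (α β : Q) (a b : g), a ∈ G α → b ∈ G β → ⁅a, b⁆ ∈ G (α + β))
    (x : Q →+ ℝ) (r s : ℝ) :
    (∀ v ∈ MP G x r, ∀ w ∈ MP G x s, v * w ∈ MP G x (r + s)) ∧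
    (∀ v ∈ MP G x r, ∀ w ∈ MPplus G x s, v * w ∈ MPplus G x (r + s)) ∧
    (0 ≤ r →
      (∀ v ∈ MP G x r, ∀ w ∈ MP G x r, v * w ∈ MP G x r) ∧
      (∀ v ∈ MPplus G x r, ∀ w ∈ MPplus G x r, v * w ∈ MPplus G x r)) :=
  moy_prasad_bracket_general G hbr x r s
end

section
/- Let Φ be a finite subset of ℚ^n, viewed as linear functionals on ℝ^n via the standard pairing. For a subset A ⊆ Φ × ℤ define S_A = {(x, r) ∈ ℝ^n × ℝ : r ≥ 0 and, for all (α, i) ∈ Φ × ℤ, one has ⟨α, x⟩ + i > r if and only if (α, i) ∈ A}. If S_A is nonempty, then the infimum of the set {r ∈ ℝ : there exists x ∈ ℝ^n with (x, r) ∈ S_A} is a rational number. -/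
/-!
Fix a point `(x₀, r₀)` of `S_A`. Then `(x, r)` lies in `S_A` exactly when `r ≥ 0` and
`⌊r - ⟨α, x⟩⌋ = ⌊r₀ - ⟨α, x₀⟩⌋` for every `α ∈ Φ`: finitely many rational linear inequalities,
some of them strict. Making them all weak does not change the infimum of `r`, because the closed
region lies in the closure of the original one (move along the segment towards `(x₀, r₀)`).
Fourier–Motzkin elimination projects the closed region, a rational polyhedron, to a subset of
the `r`-axis again cut out by rational inequalities `a * r ≤ b`, and the least element of such a
set is one of the rationals `b / a` (or a rational lower bound).
-/

theorem exists_between_of_forall_le_of_finite {α : Type*} [ConditionallyCompleteLattice α]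
    [Nonempty α] {s t : Set α} (hs : s.Finite) (ht : t.Finite)
    (hst : ∀ x ∈ s, ∀ y ∈ t, x ≤ y) : (upperBounds s ∩ lowerBounds t).Nonempty := by
  rcases s.eq_empty_or_nonempty with rfl | hs'
  · rw [upperBounds_empty, Set.univ_inter]
    exact ht.bddBelow
  rcases t.eq_empty_or_nonempty with rfl | ht'
  · rw [lowerBounds_empty, Set.inter_univ]
    exact hs.bddAbove
  exact exists_between_of_forall_le hs' ht' hst

structure RatHalfspace (k : ℕ) where
  normal : Fin k → ℚ
  bound : ℚ

namespace RatHalfspace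

variable {k : ℕ}

def eval (h : RatHalfspace k) (y : Fin k → ℝ) : ℝ := ∑ j, (h.normal j : ℝ) * y j

def toSet (h : RatHalfspace k) : Set (Fin k → ℝ) := {y | h.eval y ≤ h.bound}

def strictSet (h : RatHalfspace k) : Set (Fin k → ℝ) := {y | h.eval y < h.bound}

lemma mem_toSet {h : RatHalfspace k} {y : Fin k → ℝ} : y ∈ h.toSet ↔ h.eval y ≤ h.bound :=
  Iff.rfl

@[simp]
lemma eval_add (h : RatHalfspace k) (y z : Fin k → ℝ) : h.eval (y + z) = h.eval y + h.eval z := by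
  simp [eval, mul_add, Finset.sum_add_distrib]

@[simp]
lemma eval_smul (h : RatHalfspace k) (a : ℝ) (y : Fin k → ℝ) : h.eval (a • y) = a * h.eval y := by
  simp [eval, Finset.mul_sum, mul_left_comm]

lemma isLinearMap_eval (h : RatHalfspace k) : IsLinearMap ℝ h.eval :=
  ⟨h.eval_add, h.eval_smul⟩

lemma convex_toSet (h : RatHalfspace k) : Convex ℝ h.toSet :=
  convex_halfSpace_le h.isLinearMap_eval _

lemma openSegment_subset_strictSet {h : RatHalfspace k} {y₀ y : Fin k → ℝ}
    (hy₀ : y₀ ∈ h.strictSet) (hy : y ∈ h.toSet) : openSegment ℝ y₀ y ⊆ h.strictSet := by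
  rintro _ ⟨a, b, ha, hb, hab, rfl⟩
  have hy₀' : a * h.eval y₀ < a * h.bound := mul_lt_mul_of_pos_left hy₀ ha
  have hy' : b * h.eval y ≤ b * h.bound := mul_le_mul_of_nonneg_left hy hb.le
  calc h.eval (a • y₀ + b • y) = a * h.eval y₀ + b * h.eval y := by simp
    _ < a * h.bound + b * h.bound := by linarith
    _ = h.bound := by rw [← add_mul, hab, one_mul]

lemma eval_fin_one (h : RatHalfspace 1) (y : Fin 1 → ℝ) : h.eval y = h.normal 0 * y 0 := by
  simp [eval]

lemma eval_cons (c : ℚ) (v : Fin k → ℚ) (b : ℚ) (r : ℝ) (x : Fin k → ℝ) :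
    (⟨Fin.cons c v, b⟩ : RatHalfspace (k + 1)).eval (Fin.cons r x) =
      c * r + ∑ j, (v j : ℝ) * x j := by
  simp [eval, Fin.sum_univ_succ]

def init (h : RatHalfspace (k + 1)) : RatHalfspace k := ⟨Fin.init h.normal, h.bound⟩

abbrev lastCoeff (h : RatHalfspace (k + 1)) : ℚ := h.normal (Fin.last k)

lemma eval_snoc (h : RatHalfspace (k + 1)) (y : Fin k → ℝ) (t : ℝ) :
    h.eval (Fin.snoc y t) = h.init.eval y + h.lastCoeff * t := by
  simp [eval, init, Fin.sum_univ_castSucc, Fin.init]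

/-- The value of the last coordinate at which `Fin.snoc y ·` crosses the boundary of `h`. -/
noncomputable def solveLast (h : RatHalfspace (k + 1)) (y : Fin k → ℝ) : ℝ :=
  (h.bound - h.init.eval y) / h.lastCoeff

lemma snoc_mem_toSet_iff_of_lastCoeff_pos {h : RatHalfspace (k + 1)} (hh : 0 < h.lastCoeff)
    (y : Fin k → ℝ) (t : ℝ) : Fin.snoc y t ∈ h.toSet ↔ t ≤ h.solveLast y := by
  have : (0 : ℝ) < h.lastCoeff := by exact_mod_cast hh
  rw [solveLast, le_div_iff₀ this, mem_toSet, eval_snoc]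
  constructor <;> intro <;> linarith

lemma snoc_mem_toSet_iff_of_lastCoeff_neg {h : RatHalfspace (k + 1)} (hh : h.lastCoeff < 0)
    (y : Fin k → ℝ) (t : ℝ) : Fin.snoc y t ∈ h.toSet ↔ h.solveLast y ≤ t := by
  have : (h.lastCoeff : ℝ) < 0 := by exact_mod_cast hh
  rw [solveLast, div_le_iff_of_neg this, mem_toSet, eval_snoc]
  constructor <;> intro <;> linarith

lemma snoc_mem_toSet_iff_of_lastCoeff_eq_zero {h : RatHalfspace (k + 1)} (hh : h.lastCoeff = 0)
    (y : Fin k → ℝ) (t : ℝ) : Fin.snoc y t ∈ h.toSet ↔ y ∈ h.init.toSet := by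
  simp [toSet, eval_snoc, hh, init]

def cancelLast (p q : RatHalfspace (k + 1)) : RatHalfspace k where
  normal := -q.lastCoeff • p.init.normal + p.lastCoeff • q.init.normal
  bound := -q.lastCoeff * p.bound + p.lastCoeff * q.bound

lemma eval_cancelLast (p q : RatHalfspace (k + 1)) (y : Fin k → ℝ) :
    (cancelLast p q).eval y = -q.lastCoeff * p.init.eval y + p.lastCoeff * q.init.eval y := by
  simp [cancelLast, eval, Finset.mul_sum, Finset.sum_add_distrib, add_mul, mul_assoc]

lemma solveLast_le_solveLast_iff {p q : RatHalfspace (k + 1)} (hp : 0 < p.lastCoeff)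
    (hq : q.lastCoeff < 0) (y : Fin k → ℝ) :
    q.solveLast y ≤ p.solveLast y ↔ y ∈ (cancelLast p q).toSet := by
  have hp' : (0 : ℝ) < p.lastCoeff := by exact_mod_cast hp
  have hq' : (0 : ℝ) < -q.lastCoeff := by exact_mod_cast neg_pos.2 hq
  rw [solveLast, solveLast, ← neg_div_neg_eq, div_le_div_iff₀ hq' hp', mem_toSet,
    eval_cancelLast]
  push_cast [cancelLast]
  constructor <;> intro <;> linarith

/-- Fourier–Motzkin elimination of the last variable. -/
def elimLast (H : Set (RatHalfspace (k + 1))) : Set (RatHalfspace k) :=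
  init '' {h ∈ H | h.lastCoeff = 0} ∪
    Set.image2 cancelLast {p ∈ H | 0 < p.lastCoeff} {q ∈ H | q.lastCoeff < 0}

lemma finite_elimLast {H : Set (RatHalfspace (k + 1))} (hH : H.Finite) : (elimLast H).Finite :=
  ((hH.sep _).image _).union ((hH.sep _).image2 _ (hH.sep _))

theorem mem_iInter_elimLast_iff {H : Set (RatHalfspace (k + 1))} (hH : H.Finite)
    (y : Fin k → ℝ) :
    y ∈ ⋂ h ∈ elimLast H, h.toSet ↔ ∃ t, Fin.snoc y t ∈ ⋂ h ∈ H, h.toSet := by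
  simp only [Set.mem_iInter₂]
  constructor
  · intro hy
    have hlows_le_ups : ∀ l ∈ (solveLast · y) '' {q ∈ H | q.lastCoeff < 0},
        ∀ u ∈ (solveLast · y) '' {p ∈ H | 0 < p.lastCoeff}, l ≤ u := by
      rintro _ ⟨q, hq, rfl⟩ _ ⟨p, hp, rfl⟩
      exact (solveLast_le_solveLast_iff hp.2 hq.2 y).2 (hy _ (Or.inr ⟨p, hp, q, hq, rfl⟩))
    obtain ⟨t, hlow, hup⟩ := exists_between_of_forall_le_of_finite
      ((hH.sep _).image _) ((hH.sep _).image _) hlows_le_ups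
    refine ⟨t, fun h hH => ?_⟩
    rcases lt_trichotomy h.lastCoeff 0 with hneg | hzero | hpos
    · exact (snoc_mem_toSet_iff_of_lastCoeff_neg hneg y t).2 (hlow ⟨h, ⟨hH, hneg⟩, rfl⟩)
    · exact (snoc_mem_toSet_iff_of_lastCoeff_eq_zero hzero y t).2
        (hy _ (Or.inl ⟨h, ⟨hH, hzero⟩, rfl⟩))
    · exact (snoc_mem_toSet_iff_of_lastCoeff_pos hpos y t).2 (hup ⟨h, ⟨hH, hpos⟩, rfl⟩)
  · rintro ⟨t, ht⟩ _ (⟨h, ⟨hH, h0⟩, rfl⟩ | ⟨p, ⟨hpH, hp⟩, q, ⟨hqH, hq⟩, rfl⟩)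
    · exact (snoc_mem_toSet_iff_of_lastCoeff_eq_zero h0 y t).1 (ht h hH)
    · exact (solveLast_le_solveLast_iff hp hq y).1 <|
        ((snoc_mem_toSet_iff_of_lastCoeff_neg hq y t).1 (ht q hqH)).trans
          ((snoc_mem_toSet_iff_of_lastCoeff_pos hp y t).1 (ht p hpH))

end RatHalfspace

open RatHalfspace

def IsRatPolyhedron {k : ℕ} (P : Set (Fin k → ℝ)) : Prop :=
  ∃ H : Set (RatHalfspace k), H.Finite ∧ P = ⋂ h ∈ H, h.toSet

namespace IsRatPolyhedron

variable {k : ℕ} {P : Set (Fin k → ℝ)}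

lemma convex (hP : IsRatPolyhedron P) : Convex ℝ P := by
  obtain ⟨H, -, rfl⟩ := hP
  exact convex_iInter₂ fun h _ => h.convex_toSet

lemma image_init {P : Set (Fin (k + 1) → ℝ)} (hP : IsRatPolyhedron P) :
    IsRatPolyhedron (Fin.init '' P) := by
  obtain ⟨H, hH, rfl⟩ := hP
  refine ⟨elimLast H, finite_elimLast hH, Set.ext fun y => ?_⟩
  rw [mem_iInter_elimLast_iff hH]
  constructor
  · rintro ⟨z, hz, rfl⟩
    exact ⟨z (Fin.last k), by rwa [Fin.snoc_init_self]⟩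
  · rintro ⟨t, ht⟩
    exact ⟨_, ht, Fin.init_snoc _ _⟩

lemma exists_rat_isLeast_of_fin_one {P : Set (Fin 1 → ℝ)} (hP : IsRatPolyhedron P)
    (hne : P.Nonempty) (hbdd : BddBelow ((fun y => y 0) '' P)) :
    ∃ q : ℚ, IsLeast ((fun y => y 0) '' P) (q : ℝ) := by
  obtain ⟨H, hH, rfl⟩ := hP
  have hmem {y : Fin 1 → ℝ} :
      y ∈ ⋂ h ∈ H, h.toSet ↔ ∀ h ∈ H, (h.normal 0 : ℝ) * y 0 ≤ h.bound := by
    simp only [Set.mem_iInter₂, mem_toSet, eval_fin_one]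
  obtain ⟨B, hB⟩ := hbdd
  obtain ⟨b, hb⟩ := exists_rat_lt B
  obtain ⟨q, hqQ, hq_max⟩ := Set.exists_max_image
    (insert b ((fun h => h.bound / h.normal 0) '' {h ∈ H | h.normal 0 < 0})) id
    (((hH.sep _).image _).insert b) (Set.insert_nonempty _ _)
  have hq_le (y) (hy : y ∈ ⋂ h ∈ H, h.toSet) : (q : ℝ) ≤ y 0 := by
    rcases hqQ with rfl | ⟨h, ⟨hh, hneg⟩, rfl⟩
    · exact hb.le.trans (hB ⟨y, hy, rfl⟩)
    · have hneg' : (h.normal 0 : ℝ) < 0 := by exact_mod_cast hneg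
      push_cast
      rw [div_le_iff_of_neg hneg', mul_comm]
      exact hmem.1 hy h hh
  obtain ⟨y₀, hy₀⟩ := hne
  refine ⟨q, ⟨fun _ => (q : ℝ), hmem.2 fun h hh => ?_, rfl⟩, ?_⟩
  · rcases lt_trichotomy (h.normal 0) 0 with hneg | hzero | hpos
    · have := hq_max _ (Set.mem_insert_of_mem _ ⟨h, ⟨hh, hneg⟩, rfl⟩)
      rw [id, id, div_le_iff_of_neg hneg, mul_comm] at this
      exact_mod_cast this
    · simpa [hzero] using hmem.1 hy₀ h hh
    · have hpos' : (0 : ℝ) < h.normal 0 := by exact_mod_cast hpos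
      exact (mul_le_mul_of_nonneg_left (hq_le y₀ hy₀) hpos'.le).trans (hmem.1 hy₀ h hh)
  · rintro _ ⟨y, hy, rfl⟩
    exact hq_le y hy

theorem exists_rat_isLeast {P : Set (Fin (k + 1) → ℝ)} (hP : IsRatPolyhedron P)
    (hne : P.Nonempty) (hbdd : BddBelow ((fun y => y 0) '' P)) :
    ∃ q : ℚ, IsLeast ((fun y => y 0) '' P) (q : ℝ) := by
  induction k with
  | zero => exact exists_rat_isLeast_of_fin_one hP hne hbdd
  | succ k ih =>
    have himage : (fun y => y 0) '' P = (fun y => y 0) '' (Fin.init '' P) := by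
      rw [Set.image_image]
      rfl
    rw [himage] at hbdd ⊢
    exact ih hP.image_init (hne.image _) hbdd

end IsRatPolyhedron

theorem subset_closure_inter_iInter_strictSet {k : ℕ} {P : Set (Fin k → ℝ)} (hP : Convex ℝ P)
    {ι : Type*} {s : Set ι} {f : ι → RatHalfspace k} (hPf : ∀ i ∈ s, P ⊆ (f i).toSet)
    (hne : (P ∩ ⋂ i ∈ s, (f i).strictSet).Nonempty) :
    P ⊆ closure (P ∩ ⋂ i ∈ s, (f i).strictSet) := by
  obtain ⟨y₀, hy₀P, hy₀⟩ := hne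
  rw [Set.mem_iInter₂] at hy₀
  intro y hy
  refine closure_mono ?_ (segment_subset_closure_openSegment (right_mem_segment ℝ y₀ y))
  exact Set.subset_inter (hP.openSegment_subset hy₀P hy) <| Set.subset_iInter₂ fun i hi =>
    openSegment_subset_strictSet (hy₀ i hi) (hPf i hi hy)

lemma forall_add_int_gt_iff_floor_eq {R : Type*} [Ring R] [LinearOrder R] [IsStrictOrderedRing R]
    [FloorRing R] {a₀ r₀ a r : R} {p : ℤ → Prop} (h₀ : ∀ i : ℤ, a₀ + i > r₀ ↔ p i) :
    (∀ i : ℤ, a + i > r ↔ p i) ↔ ⌊r - a⌋ = ⌊r₀ - a₀⌋ := by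
  have floor_lt_iff (a r : R) (i : ℤ) : a + i > r ↔ ⌊r - a⌋ < i := by
    rw [Int.floor_lt, gt_iff_lt, sub_lt_iff_lt_add']
  simp only [← h₀, floor_lt_iff]
  exact ⟨eq_of_forall_gt_iff, fun h i => by rw [h]⟩

lemma mem_image_zero_iff {α : Type*} {k : ℕ} {S : Set (Fin (k + 1) → α)} {r : α} :
    r ∈ (fun y => y 0) '' S ↔ ∃ x, Fin.cons r x ∈ S :=
  ⟨fun ⟨y, hy, hr⟩ => ⟨Fin.tail y, by rwa [← hr, Fin.cons_self_tail]⟩,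
    fun ⟨_, hx⟩ => ⟨_, hx, Fin.cons_zero _ _⟩⟩

section FloorRegion

variable {n : ℕ}

/-- Points of `ℝ^(n+1)` are written `Fin.cons r x`; this is the constraint `0 ≤ r`. -/
def nonnegHead : RatHalfspace (n + 1) := ⟨Fin.cons (-1) 0, 0⟩

def floorLower (α : Fin n → ℚ) (c : ℤ) : RatHalfspace (n + 1) := ⟨Fin.cons (-1) α, -c⟩

def floorUpper (α : Fin n → ℚ) (c : ℤ) : RatHalfspace (n + 1) := ⟨Fin.cons 1 (-α), c + 1⟩

lemma cons_mem_nonnegHead_toSet {r : ℝ} {x : Fin n → ℝ} :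
    Fin.cons r x ∈ (nonnegHead : RatHalfspace (n + 1)).toSet ↔ 0 ≤ r := by
  simp [nonnegHead, mem_toSet, eval_cons]

lemma cons_mem_floorLower_toSet {α : Fin n → ℚ} {c : ℤ} {r : ℝ} {x : Fin n → ℝ} :
    Fin.cons r x ∈ (floorLower α c).toSet ↔ (c : ℝ) ≤ r - ∑ j, (α j : ℝ) * x j := by
  simp only [floorLower, mem_toSet, eval_cons]
  push_cast
  constructor <;> intro <;> linarith

lemma cons_mem_floorUpper_toSet {α : Fin n → ℚ} {c : ℤ} {r : ℝ} {x : Fin n → ℝ} :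
    Fin.cons r x ∈ (floorUpper α c).toSet ↔ r - ∑ j, (α j : ℝ) * x j ≤ c + 1 := by
  simp [floorUpper, mem_toSet, eval_cons, sub_eq_add_neg]

lemma cons_mem_floorUpper_strictSet {α : Fin n → ℚ} {c : ℤ} {r : ℝ} {x : Fin n → ℝ} :
    Fin.cons r x ∈ (floorUpper α c).strictSet ↔ r - ∑ j, (α j : ℝ) * x j < c + 1 := by
  simp [floorUpper, strictSet, eval_cons, sub_eq_add_neg]

def floorConstraints (Φ : Finset (Fin n → ℚ)) (c : (Fin n → ℚ) → ℤ) :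
    Set (RatHalfspace (n + 1)) :=
  insert nonnegHead (⋃ α ∈ Φ, {floorLower α (c α), floorUpper α (c α)})

def closedFloorRegion (Φ : Finset (Fin n → ℚ)) (c : (Fin n → ℚ) → ℤ) : Set (Fin (n + 1) → ℝ) :=
  ⋂ h ∈ floorConstraints Φ c, h.toSet

def floorRegion (Φ : Finset (Fin n → ℚ)) (c : (Fin n → ℚ) → ℤ) : Set (Fin (n + 1) → ℝ) :=
  closedFloorRegion Φ c ∩ ⋂ α ∈ (Φ : Set (Fin n → ℚ)), (floorUpper α (c α)).strictSet

variable (Φ : Finset (Fin n → ℚ)) (c : (Fin n → ℚ) → ℤ)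

lemma isRatPolyhedron_closedFloorRegion : IsRatPolyhedron (closedFloorRegion Φ c) :=
  ⟨_, (Φ.finite_toSet.biUnion fun _ _ => Set.toFinite _).insert _, rfl⟩

lemma closedFloorRegion_subset_closure (hne : (floorRegion Φ c).Nonempty) :
    closedFloorRegion Φ c ⊆ closure (floorRegion Φ c) :=
  subset_closure_inter_iInter_strictSet (isRatPolyhedron_closedFloorRegion Φ c).convex
    (fun _ hα => Set.biInter_subset_of_mem <| Set.mem_insert_of_mem _ <|
      Set.mem_biUnion hα <| Set.mem_insert_of_mem _ rfl) hne

lemma cons_mem_closedFloorRegion_iff {r : ℝ} {x : Fin n → ℝ} :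
    Fin.cons r x ∈ closedFloorRegion Φ c ↔ 0 ≤ r ∧ ∀ α ∈ Φ,
      (c α : ℝ) ≤ r - ∑ j, (α j : ℝ) * x j ∧ r - ∑ j, (α j : ℝ) * x j ≤ c α + 1 := by
  simp only [closedFloorRegion, floorConstraints, Set.biInter_insert, Set.biInter_iUnion,
    Set.biInter_singleton, Set.mem_inter_iff, Set.mem_iInter, cons_mem_nonnegHead_toSet,
    cons_mem_floorLower_toSet, cons_mem_floorUpper_toSet]

lemma cons_mem_floorRegion_iff {r : ℝ} {x : Fin n → ℝ} :
    Fin.cons r x ∈ floorRegion Φ c ↔ 0 ≤ r ∧ ∀ α ∈ Φ, ⌊r - ∑ j, (α j : ℝ) * x j⌋ = c α := by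
  simp only [floorRegion, Set.mem_inter_iff, cons_mem_closedFloorRegion_iff, Set.mem_iInter₂,
    Finset.mem_coe, cons_mem_floorUpper_strictSet, Int.floor_eq_iff]
  constructor
  · rintro ⟨⟨hr, hlow⟩, hup⟩
    exact ⟨hr, fun α hα => ⟨(hlow α hα).1, hup α hα⟩⟩
  · rintro ⟨hr, h⟩
    exact ⟨⟨hr, fun α hα => ⟨(h α hα).1, (h α hα).2.le⟩⟩, fun α hα => (h α hα).2⟩

theorem exists_rat_isGLB_floorRegion (hne : (floorRegion Φ c).Nonempty) :
    ∃ q : ℚ, IsGLB ((fun y => y 0) '' floorRegion Φ c) (q : ℝ) := by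
  have hbdd : BddBelow ((fun y => y 0) '' closedFloorRegion Φ c) := by
    refine ⟨0, ?_⟩
    rintro _ ⟨y, hy, rfl⟩
    rw [← Fin.cons_self_tail y, cons_mem_closedFloorRegion_iff] at hy
    exact hy.1
  obtain ⟨q, hq⟩ := (isRatPolyhedron_closedFloorRegion Φ c).exists_rat_isLeast
    (hne.mono Set.inter_subset_left) hbdd
  refine ⟨q, (isGLB_iff_of_subset_of_subset_closure (Set.image_mono Set.inter_subset_left)
    ?_).2 hq.isGLB⟩
  exact (Set.image_mono (closedFloorRegion_subset_closure Φ c hne)).trans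
    (image_closure_subset_closure_image (continuous_apply 0))

end FloorRegion

theorem rational_infimum_of_moy_prasad_region_general (n : ℕ) (Φ : Finset (Fin n → ℚ))
    (A : Set ((Fin n → ℚ) × ℤ))
    (hne : {p : (Fin n → ℝ) × ℝ | 0 ≤ p.2 ∧ ∀ α ∈ Φ, ∀ i : ℤ,
        ((∑ j, (α j : ℝ) * p.1 j) + (i : ℝ) > p.2 ↔ (α, i) ∈ A)}.Nonempty) :
    ∃ q : ℚ, (q : ℝ) =
      sInf {r : ℝ | ∃ x : Fin n → ℝ, 0 ≤ r ∧ ∀ α ∈ Φ, ∀ i : ℤ,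
        ((∑ j, (α j : ℝ) * x j) + (i : ℝ) > r ↔ (α, i) ∈ A)} := by
  obtain ⟨⟨x₀, r₀⟩, hr₀, h₀⟩ := hne
  set c : (Fin n → ℚ) → ℤ := fun α => ⌊r₀ - ∑ j, (α j : ℝ) * x₀ j⌋
  have hregion : {r : ℝ | ∃ x : Fin n → ℝ, 0 ≤ r ∧ ∀ α ∈ Φ, ∀ i : ℤ,
      ((∑ j, (α j : ℝ) * x j) + (i : ℝ) > r ↔ (α, i) ∈ A)} =
        (fun y => y 0) '' floorRegion Φ c := by
    ext r
    rw [mem_image_zero_iff]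
    refine exists_congr fun x => ?_
    rw [cons_mem_floorRegion_iff]
    exact and_congr_right fun _ => forall₂_congr fun α hα =>
      forall_add_int_gt_iff_floor_eq (h₀ α hα)
  have hregion_ne : (floorRegion Φ c).Nonempty :=
    ⟨Fin.cons r₀ x₀, (cons_mem_floorRegion_iff Φ c).2 ⟨hr₀, fun _ _ => rfl⟩⟩
  obtain ⟨q, hq⟩ := exists_rat_isGLB_floorRegion Φ c hregion_ne
  rw [hregion]
  exact ⟨q, (hq.csInf_eq (hregion_ne.image _)).symm⟩

/-- Let `Φ` be a finite subset of `ℚ^n`, viewed as linear functionals on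
`ℝ^n` via the standard pairing `⟨α, x⟩ = ∑ j, α j * x j`. For `A ⊆ Φ × ℤ` let
`S_A = {(x,r) : r ≥ 0 ∧ ∀ (α,i) ∈ Φ × ℤ, ⟨α,x⟩ + i > r ↔ (α,i) ∈ A}`. If `S_A` is
nonempty, then `inf {r | ∃ x, (x,r) ∈ S_A}` is a rational number. -/
theorem rational_infimum_of_moy_prasad_region (n : ℕ) (Φ : Finset (Fin n → ℚ))
    (A : Set ((Fin n → ℚ) × ℤ)) (hA : ∀ p ∈ A, p.1 ∈ Φ)
    (hne : {p : (Fin n → ℝ) × ℝ | 0 ≤ p.2 ∧ ∀ α ∈ Φ, ∀ i : ℤ,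
        ((∑ j, (α j : ℝ) * p.1 j) + (i : ℝ) > p.2 ↔ (α, i) ∈ A)}.Nonempty) :
    ∃ q : ℚ, (q : ℝ) =
      sInf {r : ℝ | ∃ x : Fin n → ℝ, 0 ≤ r ∧ ∀ α ∈ Φ, ∀ i : ℤ,
        ((∑ j, (α j : ℝ) * x j) + (i : ℝ) > r ↔ (α, i) ∈ A)} :=
  rational_infimum_of_moy_prasad_region_general n Φ A hne
end

section
/- Fix an additive map x : Q → ℝ and r ∈ ℝ. Then the set of subspaces { (𝔨_{x,r} ∩ 𝔨_{y,r}) + 𝔨_{x,r+} : y an additive map Q → ℝ } of 𝔤((t)) is finite. -/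
open HahnSeries

/-!
Both Moy–Prasad subspaces are cut out coefficientwise by sums of root spaces, and intersections
and sums of such coefficientwise subspaces are again coefficientwise. Since the root spaces are
independent, `(𝔨_{x,r} ∩ 𝔨_{y,r}) + 𝔨_{x,r+}` takes at `t^i` the root spaces with
`x α + i > r`, together with those on the wall `x α + i = r` for which `x α ≤ y α`. Thus it
depends on `y` only through the subset `{α | x α ≤ y α}` of the finite set `Φ ∪ {0}`.
-/

section

variable {α ι : Type*} [CompleteLattice α]

theorem biSup_inter_eq_of_eq_bot {f : ι → α} {s : Set ι} (hf : ∀ i ∉ s, f i = ⊥) (P : Set ι) :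
    ⨆ i ∈ P ∩ s, f i = ⨆ i ∈ P, f i := by
  refine le_antisymm (biSup_mono Set.inter_subset_left) (iSup₂_le fun i hi => ?_)
  by_cases his : i ∈ s
  · exact le_biSup f ⟨hi, his⟩
  · exact (hf i his).trans_le bot_le

theorem iSupIndep.biSup_inf_biSup [IsModularLattice α] [IsCompactlyGenerated α] {f : ι → α}
    (hf : iSupIndep f) (s t : Set ι) :
    (⨆ i ∈ s, f i) ⊓ (⨆ i ∈ t, f i) = ⨆ i ∈ s ∩ t, f i := by
  have hsplit : ⨆ i ∈ s, f i = (⨆ i ∈ s ∩ t, f i) ⊔ ⨆ i ∈ s \ t, f i := by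
    rw [← iSup_union, Set.inter_union_sdiff]
  rw [hsplit, sup_inf_assoc_of_le _ (biSup_mono Set.inter_subset_right),
    (hf.disjoint_biSup_biSup Set.disjoint_sdiff_left).eq_bot, sup_bot_eq]

end

namespace HahnSeries

variable {Γ R V : Type*} [PartialOrder Γ] [Semiring R] [AddCommGroup V] [Module R V]

def coeffSubmodule (W : Γ → Submodule R V) : Submodule R (HahnSeries Γ V) where
  carrier := {v | ∀ i, v.coeff i ∈ W i}
  zero_mem' _ := zero_mem _
  add_mem' ha hb i := add_mem (ha i) (hb i)
  smul_mem' c _ ha i := Submodule.smul_mem _ c (ha i)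

theorem mem_coeffSubmodule {W : Γ → Submodule R V} {v : HahnSeries Γ V} :
    v ∈ coeffSubmodule W ↔ ∀ i, v.coeff i ∈ W i :=
  Iff.rfl

theorem coeffSubmodule_mono {W W' : Γ → Submodule R V} (h : W ≤ W') :
    coeffSubmodule W ≤ coeffSubmodule W' :=
  fun _ hv i => h i (hv i)

theorem coeffSubmodule_inf (W W' : Γ → Submodule R V) :
    coeffSubmodule (W ⊓ W') = coeffSubmodule W ⊓ coeffSubmodule W' := by
  ext v
  simp only [Submodule.mem_inf, mem_coeffSubmodule, Pi.inf_apply, forall_and]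

theorem coeffSubmodule_sup (W W' : Γ → Submodule R V) :
    coeffSubmodule (W ⊔ W') = coeffSubmodule W ⊔ coeffSubmodule W' := by
  refine le_antisymm (fun v hv => ?_)
    (sup_le (coeffSubmodule_mono le_sup_left) (coeffSubmodule_mono le_sup_right))
  -- split every coefficient, choosing `0` for the zero ones so that the support stays PWO
  have hsplit : ∀ i, ∃ a ∈ W i, v.coeff i - a ∈ W' i ∧ (v.coeff i = 0 → a = 0) := by
    intro i
    by_cases h0 : v.coeff i = 0
    · exact ⟨0, zero_mem _, by simp [h0], fun _ => rfl⟩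
    · obtain ⟨a, ha, b, hb, hab⟩ := Submodule.mem_sup.mp (hv i)
      exact ⟨a, ha, by rwa [← hab, add_sub_cancel_left], fun h => absurd h h0⟩
  choose a ha hb ha0 using hsplit
  let w : HahnSeries Γ V := ⟨a, v.isPWO_support.mono fun i hi => mt (ha0 i) hi⟩
  rw [← add_sub_cancel w v]
  exact Submodule.add_mem_sup ha hb

end HahnSeries

section MoyPrasad

variable {k : Type*} [Field k] {g : Type*} [LieRing g] [LieAlgebra k g] {Q : Type*} [AddCommGroup Q]

theorem MP_eq_coeffSubmodule (G : Q → Submodule k g) (x : Q →+ ℝ) (r : ℝ) :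
    MP G x r = coeffSubmodule fun i : ℤ => ⨆ α ∈ {α | r ≤ x α + i}, G α :=
  rfl

theorem MPplus_eq_coeffSubmodule (G : Q → Submodule k g) (x : Q →+ ℝ) (r : ℝ) :
    MPplus G x r = coeffSubmodule fun i : ℤ => ⨆ α ∈ {α | r < x α + i}, G α :=
  rfl

/-- Interpolates between `𝔨_{x,r+}` (`T = ∅`) and `𝔨_{x,r}` (`T = univ`): on the wall
`x α + i = r` only the roots in `T` are allowed. -/
noncomputable def MPplusOn (G : Q → Submodule k g) (x : Q →+ ℝ) (r : ℝ) (T : Set Q) :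
    Submodule k (HahnSeries ℤ g) :=
  coeffSubmodule fun i : ℤ => ⨆ α ∈ {α | r < x α + i ∨ (r = x α + i ∧ α ∈ T)}, G α

theorem MP_inf_MP_sup_MPplus_eq_MPplusOn {G : Q → Submodule k g} (hG : iSupIndep G)
    {s : Set Q} (hs : ∀ α ∉ s, G α = ⊥) (x y : Q →+ ℝ) (r : ℝ) :
    (MP G x r ⊓ MP G y r) ⊔ MPplus G x r = MPplusOn G x r {α ∈ s | x α ≤ y α} := by
  rw [MP_eq_coeffSubmodule, MP_eq_coeffSubmodule, MPplus_eq_coeffSubmodule,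
    ← coeffSubmodule_inf, ← coeffSubmodule_sup, MPplusOn]
  congr 1
  funext i
  rw [Pi.sup_apply, Pi.inf_apply, hG.biSup_inf_biSup, ← iSup_union,
    ← biSup_inter_eq_of_eq_bot hs, ← biSup_inter_eq_of_eq_bot hs (P := {α | _ ∨ _})]
  -- on the wall `x α + i = r`, the condition `r ≤ y α + i` reads `x α ≤ y α`
  refine congrArg (fun P : Set Q => ⨆ α ∈ P, G α) (Set.ext fun α => ?_)
  grind

end MoyPrasad

theorem moy_prasad_intersections_finite_general
    {k : Type*} [Field k] {g : Type*} [LieRing g] [LieAlgebra k g]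
    {Q : Type*} [AddCommGroup Q] [DecidableEq Q]
    (Φ : Finset Q)
    (G : Q → Submodule k g)
    (hsupp : ∀ α : Q, α ∉ Φ → α ≠ 0 → G α = ⊥)
    (hdec : DirectSum.IsInternal G)
    (x : Q →+ ℝ) (r : ℝ) :
    {S : Submodule k (HahnSeries ℤ g) |
      ∃ y : Q →+ ℝ, S = (MP G x r ⊓ MP G y r) ⊔ MPplus G x r}.Finite := by
  have hs : ∀ α ∉ insert 0 (Φ : Set Q), G α = ⊥ := fun α hα =>
    hsupp α (fun h => hα (Or.inr h)) (fun h => hα (Or.inl h))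
  refine (((Φ.finite_toSet.insert 0).finite_subsets).image (MPplusOn G x r)).subset ?_
  rintro _ ⟨y, rfl⟩
  exact ⟨_, Set.sep_subset _ _,
    (MP_inf_MP_sup_MPplus_eq_MPplusOn hdec.submodule_iSupIndep hs x y r).symm⟩

/-- Fix an additive `x : Q → ℝ` and `r ∈ ℝ`. The set of subspaces
`(𝔨_{x,r} ∩ 𝔨_{y,r}) + 𝔨_{x,r+}` of `𝔤((t)) = HahnSeries ℤ 𝔤`, as `y` ranges over all
additive maps `Q → ℝ`, is finite. -/
theorem moy_prasad_intersections_finite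
    {k : Type*} [Field k] {g : Type*} [LieRing g] [LieAlgebra k g]
    {Q : Type*} [AddCommGroup Q] [DecidableEq Q]
    (Φ : Finset Q) (hΦ : (0 : Q) ∉ Φ)
    (G : Q → Submodule k g)
    (hsupp : ∀ α : Q, α ∉ Φ → α ≠ 0 → G α = ⊥)
    (hdec : DirectSum.IsInternal G)
    (hbr : ∀ (α β : Q) (a b : g), a ∈ G α → b ∈ G β → ⁅a, b⁆ ∈ G (α + β))
    (x : Q →+ ℝ) (r : ℝ) :
    {S : Submodule k (HahnSeries ℤ g) |
      ∃ y : Q →+ ℝ, S = (MP G x r ⊓ MP G y r) ⊔ MPplus G x r}.Finite :=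
  moy_prasad_intersections_finite_general Φ G hsupp hdec x r
end
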